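/- Let K be a positive integer, let T₁, …, T_K be real-valued random variables and X a random variable with values in a measurable space E, all on a probability space (Ω, 𝓕, P), and let C be a real-valued random variable independent of the random vector (T₁, …, T_K, X). Let t ∈ ℝ, define h(u) = P(C ≥ u), and assume there is c > 0 with h(u) ≥ c for all u ≤ t. Then E[ Σ_{k=1}^K 1{T_k ≤ t} · 1{T_k ≤ C} / h(T_k) | σ(X) ] = E[ Σ_{k=1}^K 1{T_k ≤ t} | σ(X) ] almost surely. -/

import Mathlib

/-!
Since `C` is independent of `Y = (T, X)`, conditioning on `Y` freezes `Y` and integrates out `C`: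
`E[F(Y, C) | Y] = ∫ F(Y, z) dP_C(z)`. For the IPCW summand the integral in `z` of
`1{T_k ≤ z}` is exactly `h(T_k)`, which cancels the weight, so
`E[Σ_k 1{T_k ≤ t} 1{T_k ≤ C} / h(T_k) | Y] = Σ_k 1{T_k ≤ t}`; the lower bound `h ≥ c` on
`(-∞, t]` keeps the weights bounded and nonzero where they matter. Since `σ(X) ⊆ σ(Y)`,
the tower property yields the identity given `X`.
-/

open MeasureTheory ProbabilityTheory

namespace ProbabilityTheory

variable {Ω β γ : Type*} {mΩ : MeasurableSpace Ω} {mβ : MeasurableSpace β}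
  {mγ : MeasurableSpace γ} {P : Measure Ω} [IsFiniteMeasure P] {Y : Ω → β} {Z : Ω → γ}
  {F : β × γ → ℝ}

theorem IndepFun.setIntegral_preimage_comp_prodMk (hYZ : IndepFun Y Z P) (hY : Measurable Y)
    (hZ : Measurable Z) (hF : StronglyMeasurable F)
    (hFi : Integrable F ((P.map Y).prod (P.map Z))) {B : Set β} (hB : MeasurableSet B) :
    ∫ ω in Y ⁻¹' B, F (Y ω, Z ω) ∂P = ∫ ω in Y ⁻¹' B, ∫ z, F (Y ω, z) ∂(P.map Z) ∂P := by
  have hmap : P.map (fun ω => (Y ω, Z ω)) = (P.map Y).prod (P.map Z) :=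
    (indepFun_iff_map_prod_eq_prod_map_map hY.aemeasurable hZ.aemeasurable).mp hYZ
  calc ∫ ω in Y ⁻¹' B, F (Y ω, Z ω) ∂P
      = ∫ p in B ×ˢ Set.univ, F p ∂(P.map Y).prod (P.map Z) := by
        rw [← hmap, setIntegral_map (hB.prod MeasurableSet.univ) hF.aestronglyMeasurable
          (hY.prodMk hZ).aemeasurable, Set.mk_preimage_prod, Set.preimage_univ, Set.inter_univ]
    _ = ∫ y in B, ∫ z, F (y, z) ∂(P.map Z) ∂(P.map Y) := by
        rw [setIntegral_prod F hFi.integrableOn, Measure.restrict_univ]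
    _ = ∫ ω in Y ⁻¹' B, ∫ z, F (Y ω, z) ∂(P.map Z) ∂P :=
        setIntegral_map hB hF.integral_prod_right'.aestronglyMeasurable hY.aemeasurable

theorem IndepFun.condExp_comp_prodMk_ae_eq (hYZ : IndepFun Y Z P) (hY : Measurable Y)
    (hZ : Measurable Z) (hF : StronglyMeasurable F)
    (hFi : Integrable F ((P.map Y).prod (P.map Z))) :
    P[fun ω => F (Y ω, Z ω) | mβ.comap Y] =ᵐ[P] fun ω => ∫ z, F (Y ω, z) ∂(P.map Z) := by
  have hmap : P.map (fun ω => (Y ω, Z ω)) = (P.map Y).prod (P.map Z) :=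
    (indepFun_iff_map_prod_eq_prod_map_map hY.aemeasurable hZ.aemeasurable).mp hYZ
  have hFYZ : Integrable (fun ω => F (Y ω, Z ω)) P := by
    rw [← hmap] at hFi
    exact (integrable_map_measure hF.aestronglyMeasurable (hY.prodMk hZ).aemeasurable).mp hFi
  have hfrozen : Integrable (fun ω => ∫ z, F (Y ω, z) ∂(P.map Z)) P :=
    (integrable_map_measure hF.integral_prod_right'.aestronglyMeasurable hY.aemeasurable).mp
      hFi.integral_prod_left
  refine (ae_eq_condExp_of_forall_setIntegral_eq hY.comap_le hFYZ
    (fun _ _ _ => hfrozen.integrableOn) ?_ ?_).symm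
  · rintro _ ⟨B, hB, rfl⟩ _
    exact (hYZ.setIntegral_preimage_comp_prodMk hY hZ hF hFi hB).symm
  · exact (hF.integral_prod_right'.comp_measurable (comap_measurable Y)).aestronglyMeasurable

end ProbabilityTheory

noncomputable def ipcwWeight (h : ℝ → ℝ) (t a z : ℝ) : ℝ :=
  (if a ≤ t then 1 else 0) * (if a ≤ z then 1 else 0) / h a

section IpcwWeight

variable {h : ℝ → ℝ} {t c : ℝ}

lemma abs_ipcwWeight_le (hc : 0 < c) (hcbd : ∀ u ≤ t, c ≤ h u) (a z : ℝ) :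
    |ipcwWeight h t a z| ≤ c⁻¹ := by
  unfold ipcwWeight
  by_cases hat : a ≤ t
  · have hha := hcbd a hat
    by_cases haz : a ≤ z
    · simpa [hat, haz, abs_of_pos (hc.trans_le hha)] using inv_anti₀ hc hha
    · simp [haz, hc.le]
  · simp [hat, hc.le]

lemma Measurable.ipcwWeight (hh : Measurable h) {α : Type*} {mα : MeasurableSpace α}
    {τ ζ : α → ℝ} (hτ : Measurable τ) (hζ : Measurable ζ) :
    Measurable fun x => ipcwWeight h t (τ x) (ζ x) := by
  unfold _root_.ipcwWeight
  refine ((Measurable.ite ?_ measurable_const measurable_const).mul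
    (Measurable.ite ?_ measurable_const measurable_const)).div (hh.comp hτ)
  · exact measurableSet_le hτ measurable_const
  · exact measurableSet_le hτ hζ

lemma Integrable.ipcwWeight (hh : Measurable h) (hc : 0 < c) (hcbd : ∀ u ≤ t, c ≤ h u)
    {α : Type*} {mα : MeasurableSpace α} {μ : Measure α} [IsFiniteMeasure μ] {τ ζ : α → ℝ}
    (hτ : Measurable τ) (hζ : Measurable ζ) :
    Integrable (fun x => ipcwWeight h t (τ x) (ζ x)) μ :=
  .of_bound (hh.ipcwWeight hτ hζ).aestronglyMeasurable c⁻¹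
    (ae_of_all _ fun x => abs_ipcwWeight_le hc hcbd (τ x) (ζ x))

lemma integral_map_ite_le {Ω : Type*} {mΩ : MeasurableSpace Ω} {P : Measure Ω} {C : Ω → ℝ}
    (hC : Measurable C) (a : ℝ) :
    ∫ z, (if a ≤ z then (1 : ℝ) else 0) ∂(P.map C) = P.real {ω | a ≤ C ω} := by
  have hind : (fun z : ℝ => if a ≤ z then (1 : ℝ) else 0) = (Set.Ici a).indicator 1 := by
    ext z
    simp [Set.indicator_apply]
  rw [hind, integral_indicator_one measurableSet_Ici, map_measureReal_apply hC measurableSet_Ici]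
  rfl

lemma integral_ipcwWeight_map {Ω : Type*} {mΩ : MeasurableSpace Ω} {P : Measure Ω}
    {C : Ω → ℝ} (hC : Measurable C) (hh : ∀ u, h u = P.real {ω | u ≤ C ω})
    (hpos : ∀ u ≤ t, h u ≠ 0) (a : ℝ) :
    ∫ z, ipcwWeight h t a z ∂(P.map C) = if a ≤ t then 1 else 0 := by
  unfold ipcwWeight
  rw [integral_div, integral_const_mul, integral_map_ite_le hC, ← hh]
  by_cases hat : a ≤ t
  · simp [hat, hpos a hat]
  · simp [hat]

end IpcwWeight

theorem stmt_9_general {Ω : Type*} [mΩ : MeasurableSpace Ω] (P : Measure Ω) [IsProbabilityMeasure P]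
    {E : Type*} [mE : MeasurableSpace E]
    (K : ℕ) (T : Fin K → Ω → ℝ) (X : Ω → E) (C : Ω → ℝ)
    (hT : ∀ k, Measurable (T k)) (hX : Measurable X) (hC : Measurable C)
    (hTXC : ProbabilityTheory.IndepFun C (fun ω => ((fun k : Fin K => T k ω), X ω)) P)
    (t : ℝ) (h : ℝ → ℝ) (hh : ∀ u, h u = (P {ω | u ≤ C ω}).toReal)
    (c : ℝ) (hc : 0 < c) (hcbd : ∀ u ≤ t, c ≤ h u) :
    P[fun ω => ∑ k : Fin K, (if T k ω ≤ t then (1 : ℝ) else 0)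
        * (if T k ω ≤ C ω then (1 : ℝ) else 0) / h (T k ω) | MeasurableSpace.comap X mE]
      =ᵐ[P] P[fun ω => ∑ k : Fin K, (if T k ω ≤ t then (1 : ℝ) else 0)
        | MeasurableSpace.comap X mE] := by
  set Y : Ω → (Fin K → ℝ) × E := fun ω => (fun k => T k ω, X ω)
  have hY : Measurable Y := (measurable_pi_lambda _ hT).prodMk hX
  have hXY : MeasurableSpace.comap X mE ≤ MeasurableSpace.comap Y inferInstance :=
    (measurable_snd.comp (comap_measurable Y)).comap_le
  have hh_meas : Measurable h :=
    Antitone.measurable fun u v huv => by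
      simp only [hh]
      exact measureReal_mono fun ω hω => huv.trans hω
  let F : ((Fin K → ℝ) × E) × ℝ → ℝ := fun p => ∑ k, ipcwWeight h t (p.1.1 k) p.2
  have hF : Measurable F := Finset.measurable_sum _ fun k _ =>
    hh_meas.ipcwWeight ((measurable_pi_apply k).comp (measurable_fst.comp measurable_fst))
      measurable_snd
  have hFi : Integrable F ((P.map Y).prod (P.map C)) := integrable_finsetSum _ fun k _ =>
    Integrable.ipcwWeight hh_meas hc hcbd
      ((measurable_pi_apply k).comp (measurable_fst.comp measurable_fst)) measurable_snd
  calc _ =ᵐ[P] P[P[fun ω => F (Y ω, C ω) | MeasurableSpace.comap Y inferInstance]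
          | MeasurableSpace.comap X mE] := (condExp_condExp_of_le hXY hY.comap_le).symm
    _ =ᵐ[P] P[fun ω => ∫ z, F (Y ω, z) ∂(P.map C) | MeasurableSpace.comap X mE] :=
        condExp_congr_ae (hTXC.symm.condExp_comp_prodMk_ae_eq hY hC hF.stronglyMeasurable hFi)
    _ = _ := by
        congr 1
        funext ω
        show ∫ z, ∑ k, ipcwWeight h t (T k ω) z ∂(P.map C) = _
        rw [integral_finsetSum _ fun k _ => Integrable.ipcwWeight hh_meas hc hcbd
          measurable_const measurable_id']
        exact Finset.sum_congr rfl fun k _ => integral_ipcwWeight_map hC hh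
          (fun u hu => (hc.trans_le (hcbd u hu)).ne') (T k ω)

/-- Conditional version of the crucial IPCW identity (Equation (3)) for a recurrent-event
process with at most `K` events: if `C` is independent of `(T₁, …, T_K, X)` and
`h u = P(C ≥ u) ≥ c > 0` for `u ≤ t`, then
`E[ Σ_k 1{T_k ≤ t} 1{T_k ≤ C} / h(T_k) | σ(X) ] = E[ Σ_k 1{T_k ≤ t} | σ(X) ]` a.s. -/
theorem stmt_9 {Ω : Type*} [mΩ : MeasurableSpace Ω] (P : Measure Ω) [IsProbabilityMeasure P]
    {E : Type*} [mE : MeasurableSpace E]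
    (K : ℕ) (hK : 0 < K) (T : Fin K → Ω → ℝ) (X : Ω → E) (C : Ω → ℝ)
    (hT : ∀ k, Measurable (T k)) (hX : Measurable X) (hC : Measurable C)
    (hTXC : ProbabilityTheory.IndepFun C (fun ω => ((fun k : Fin K => T k ω), X ω)) P)
    (t : ℝ) (h : ℝ → ℝ) (hh : ∀ u, h u = (P {ω | u ≤ C ω}).toReal)
    (c : ℝ) (hc : 0 < c) (hcbd : ∀ u ≤ t, c ≤ h u) :
    P[fun ω => ∑ k : Fin K, (if T k ω ≤ t then (1 : ℝ) else 0)
        * (if T k ω ≤ C ω then (1 : ℝ) else 0) / h (T k ω) | MeasurableSpace.comap X mE]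
      =ᵐ[P] P[fun ω => ∑ k : Fin K, (if T k ω ≤ t then (1 : ℝ) else 0)
        | MeasurableSpace.comap X mE] :=
  stmt_9_general (mΩ := mΩ) P (mE := mE) K T X C hT hX hC hTXC t h hh c hc hcbd
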